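/- arXiv:1606.08225 — 5 statements merged into one kernel-verified Lean document; each statement's English description precedes it below -/
import Mathlib

section
/- For every Borel probability measure μ on ℝ^N (N ≥ 1), there exists a point x ∈ ℝ^N such that every closed half-space containing x has μ-measure at least 1/(N+1). -/
/-!
Call a set light if its measure is less than `1/(N+1)`. Consider the closed complements of the
light open half-spaces together with a large closed ball with light complement. Any `N + 1` of
these convex sets meet, since their complements have total measure `< 1` and so cannot cover the
space. By Helly's theorem and compactness of the ball, all of them share a point `x`. A light
closed half-space containing `x` could be shifted slightly outwards to a light open half-space
still containing `x`, which is impossible.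
-/

open MeasureTheory Filter Topology Set Module
open scoped ENNReal InnerProductSpace Finset

/-- The (half-space, or Tukey) depth of a point `x` with respect to a measure `μ`:
the infimum of the measures of closed half-spaces containing `x`. -/
noncomputable def depth {E : Type*} [NormedAddCommGroup E] [InnerProductSpace ℝ E] [MeasurableSpace E]
    (μ : Measure E) (x : E) : ENNReal :=
  ⨅ (v : E) (_ : ‖v‖ = 1) (a : ℝ) (_ : a ≤ (inner ℝ x v : ℝ)), μ {y | a ≤ (inner ℝ y v : ℝ)}

theorem Convex.helly_theorem_of_isCompact {ι 𝕜 E : Type*} [Field 𝕜] [LinearOrder 𝕜]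
    [IsStrictOrderedRing 𝕜] [AddCommGroup E] [Module 𝕜 E] [FiniteDimensional 𝕜 E]
    [TopologicalSpace E] {F : ι → Set E} (i₀ : ι) (h_compact : IsCompact (F i₀))
    (h_closed : ∀ i, IsClosed (F i)) (h_convex : ∀ i, Convex 𝕜 (F i))
    (h_inter : ∀ I : Finset ι, #I ≤ finrank 𝕜 E + 1 → (⋂ i ∈ I, F i).Nonempty) :
    (⋂ i, F i).Nonempty := by
  classical
  rw [← inter_eq_right.mpr (iInter_subset F i₀)]
  refine h_compact.inter_iInter_nonempty F h_closed fun I => ?_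
  simpa using Convex.helly_theorem' (s := insert i₀ I) (fun i _ => h_convex i)
    fun J _ hJ => h_inter J hJ

theorem nonempty_biInter_of_measure_compl_lt {α ι : Type*} [MeasurableSpace α] {μ : Measure α}
    [IsProbabilityMeasure μ] {f : ι → Set α} {J : Finset ι} {n : ℕ} (hJ : #J ≤ n)
    (h : ∀ j ∈ J, μ (f j)ᶜ < (n : ℝ≥0∞)⁻¹) : (⋂ j ∈ J, f j).Nonempty := by
  have h_sum : ∑ j ∈ J, μ (f j)ᶜ < 1 := by
    rcases J.eq_empty_or_nonempty with rfl | hJ_ne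
    · simp
    calc ∑ j ∈ J, μ (f j)ᶜ < ∑ _j ∈ J, (n : ℝ≥0∞)⁻¹ := ENNReal.sum_lt_sum_of_nonempty hJ_ne h
      _ = #J * (n : ℝ≥0∞)⁻¹ := by simp
      _ ≤ n * (n : ℝ≥0∞)⁻¹ := by gcongr
      _ ≤ 1 := ENNReal.mul_inv_le_one _
  rw [Set.nonempty_iff_ne_empty]
  intro h_empty
  have h_union : μ (⋃ j ∈ J, (f j)ᶜ) = 1 := by
    rw [← compl_iInter₂, h_empty, compl_empty, measure_univ]
  exact (h_union ▸ measure_biUnion_finset_le J _).not_gt h_sum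

theorem exists_measure_compl_closedBall_lt {E : Type*} [NormedAddCommGroup E] [ProperSpace E]
    [MeasurableSpace E] [BorelSpace E] (μ : Measure E) [IsFiniteMeasure μ] {t : ℝ≥0∞}
    (ht : 0 < t) : ∃ R : ℝ, μ (Metric.closedBall 0 R)ᶜ < t := by
  have h_tendsto := tendsto_measure_compl_closedBall_of_isTightMeasureSet
    (isTightMeasureSet_singleton (μ := μ)) 0
  simp only [_root_.iSup_singleton] at h_tendsto
  exact (h_tendsto.eventually_lt_const ht).exists

theorem tendsto_measure_setOf_lt_nhdsLT {α : Type*} [MeasurableSpace α] {μ : Measure α}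
    [IsFiniteMeasure μ] {f : α → ℝ} (hf : Measurable f) (a : ℝ) :
    Tendsto (fun b => μ {y | b < f y}) (𝓝[<] a) (𝓝 (μ {y | a ≤ f y})) := by
  have h_gap : Tendsto (fun b => a - b) (𝓝[<] a) (𝓝[>] 0) :=
    tendsto_nhdsWithin_of_tendsto_nhds_of_eventually_within _
      (((continuous_const.sub continuous_id).tendsto' a 0 (sub_self a)).mono_left
        nhdsWithin_le_nhds)
      (eventually_nhdsWithin_of_forall fun _ hb => mem_Ioi.mpr (sub_pos.mpr hb))
  have h_inter : ⋂ r > (0 : ℝ), {y | a - r < f y} = {y | a ≤ f y} := by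
    ext y
    simp only [mem_iInter, mem_ofPred_eq, sub_lt_iff_lt_add]
    exact le_iff_forall_pos_lt_add.symm
  have h_shift := tendsto_measure_biInter_gt (μ := μ) (s := fun r => {y | a - r < f y})
    (fun _ _ => (measurableSet_lt measurable_const hf).nullMeasurableSet)
    (fun i j _ hij y (hy : a - i < f y) => show a - j < f y by linarith)
    ⟨1, one_pos, measure_ne_top _ _⟩
  rw [h_inter] at h_shift
  refine (h_shift.comp h_gap).congr fun b => ?_
  simp

theorem le_depth_of_inner_le_of_measure_lt {E : Type*} [NormedAddCommGroup E]
    [InnerProductSpace ℝ E] [MeasurableSpace E] [OpensMeasurableSpace E] {μ : Measure E}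
    [IsFiniteMeasure μ] {x : E} {t : ℝ≥0∞}
    (hx : ∀ (v : E) (b : ℝ), μ {y | b < ⟪y, v⟫_ℝ} < t → ⟪x, v⟫_ℝ ≤ b) : t ≤ depth μ x := by
  refine le_iInf₂ fun v _ => le_iInf₂ fun a hxa => not_lt.mp fun h_light => ?_
  have h_tendsto := tendsto_measure_setOf_lt_nhdsLT (μ := μ) (f := fun y => ⟪y, v⟫_ℝ)
    (by fun_prop) a
  obtain ⟨b, hb_light, hba⟩ :=
    ((h_tendsto.eventually_lt_const h_light).and self_mem_nhdsWithin).exists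
  exact (hx v b hb_light).not_gt (hba.trans_le hxa)

theorem rado_centerpoint_general (N : ℕ)
    (μ : Measure (EuclideanSpace ℝ (Fin N))) [IsProbabilityMeasure μ] :
    ∃ x : EuclideanSpace ℝ (Fin N), ((N : ENNReal) + 1)⁻¹ ≤ depth μ x := by
  set t : ℝ≥0∞ := ((N : ℝ≥0∞) + 1)⁻¹
  obtain ⟨R, hR⟩ := exists_measure_compl_closedBall_lt μ (t := t) (by simp [t])
  let Light := {p : EuclideanSpace ℝ (Fin N) × ℝ // μ {y | p.2 < ⟪y, p.1⟫_ℝ} < t}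
  let F (o : Option Light) : Set (EuclideanSpace ℝ (Fin N)) :=
    o.elim (Metric.closedBall 0 R) fun p => {y | ⟪y, p.1.1⟫_ℝ ≤ p.1.2}
  have hF_closed : ∀ o, IsClosed (F o) := by
    rintro (_ | p)
    exacts [Metric.isClosed_closedBall, isClosed_le (by fun_prop) continuous_const]
  have hF_convex : ∀ o, Convex ℝ (F o) := by
    rintro (_ | p)
    exacts [convex_closedBall _ _, convex_halfSpace_le
      ⟨fun _ _ => inner_add_left _ _ _, fun _ _ => real_inner_smul_left _ _ _⟩ _]
  have hF_compl : ∀ o, μ (F o)ᶜ < t := by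
    rintro (_ | p)
    exacts [hR, by simpa only [F, Option.elim, compl_ofPred, not_le] using p.2]
  obtain ⟨x, hx⟩ := Convex.helly_theorem_of_isCompact none (isCompact_closedBall _ _)
    hF_closed hF_convex fun I hI => nonempty_biInter_of_measure_compl_lt (μ := μ) (n := N + 1)
      (by simpa [finrank_euclideanSpace_fin] using hI) fun o _ => by push_cast; exact hF_compl o
  exact ⟨x, le_depth_of_inner_le_of_measure_lt fun v b hvb =>
    mem_iInter.mp hx (some ⟨(v, b), hvb⟩)⟩

/-- Rado's centerpoint theorem: every Borel probability measure on `ℝ^N` has a point of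
depth at least `1/(N+1)`, i.e. every closed half-space containing that point has measure
at least `1/(N+1)`. -/
theorem rado_centerpoint (N : ℕ) (hN : 1 ≤ N)
    (μ : Measure (EuclideanSpace ℝ (Fin N))) [IsProbabilityMeasure μ] :
    ∃ x : EuclideanSpace ℝ (Fin N), ((N : ENNReal) + 1)⁻¹ ≤ depth μ x :=
  rado_centerpoint_general N μ
end

section
/- The depth function x ↦ depth_μ(x) of a Borel probability measure μ on ℝ^N is upper semicontinuous. -/
/-!
By continuity from above, `μ {y | a ≤ ⟪y, v⟫}` is the infimum of `μ {y | b ≤ ⟪y, v⟫}` over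
`b < a`, so the depth is unchanged if one only allows half-spaces containing `x` in their
interior. Each such half-space contributes a function of `x` that is constant on an open set
and `⊤` outside it, hence upper semicontinuous, and an infimum of upper semicontinuous
functions is upper semicontinuous.
-/

open MeasureTheory

open Set

theorem IsOpen.upperSemicontinuous_iInf_const {α β : Type*} [TopologicalSpace α]
    [CompleteLattice β] {p : α → Prop} (hp : IsOpen {x | p x}) (c : β) :
    UpperSemicontinuous fun x => ⨅ (_ : p x), c := by
  intro x t ht
  by_cases hx : p x
  · filter_upwards [hp.mem_nhds hx] with y hy
    simpa [hx, hy] using ht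
  · simp [hx] at ht

theorem measure_le_eq_iInf_lt {α : Type*} [MeasurableSpace α] (μ : Measure α)
    [IsFiniteMeasure μ] {f : α → ℝ} (hf : Measurable f) (a : ℝ) :
    μ {y | a ≤ f y} = ⨅ b < a, μ {y | b ≤ f y} := by
  have hinter : {y | a ≤ f y} = ⋂ b : Iio a, {y | (b : ℝ) ≤ f y} := by
    ext y
    simp [forall_lt_imp_le_iff_le_of_dense]
  rw [hinter, Antitone.measure_iInter, iInf_subtype']
  · rfl
  · exact fun b c hbc y (hy : (c : ℝ) ≤ f y) => show (b : ℝ) ≤ f y from le_trans hbc hy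
  · exact fun b => (measurableSet_le measurable_const hf).nullMeasurableSet
  · exact ⟨⟨a - 1, by simp⟩, measure_ne_top μ _⟩

variable {E : Type*} [NormedAddCommGroup E] [InnerProductSpace ℝ E] [MeasurableSpace E]
  [OpensMeasurableSpace E]

theorem depth_eq_iInf_lt_inner (μ : Measure E) [IsFiniteMeasure μ] (x : E) :
    depth μ x = ⨅ (v : E) (_ : ‖v‖ = 1) (b : ℝ) (_ : b < inner ℝ x v),
      μ {y | b ≤ (inner ℝ y v : ℝ)} := by
  refine iInf_congr fun v => iInf_congr fun _ => le_antisymm ?_ ?_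
  · exact le_iInf₂ fun b hb => iInf₂_le b hb.le
  · refine le_iInf₂ fun a ha => ?_
    rw [measure_le_eq_iInf_lt μ (f := fun y => inner ℝ y v) (by fun_prop) a]
    exact iInf₂_mono' fun b hb => ⟨b, hb.trans_le ha, le_rfl⟩

/-- The depth function of a Borel probability measure on ℝ^N is upper semicontinuous. -/
theorem depth_upperSemicontinuous (N : ℕ)
    (μ : Measure (EuclideanSpace ℝ (Fin N))) [IsProbabilityMeasure μ] :
    UpperSemicontinuous (fun x : EuclideanSpace ℝ (Fin N) => depth μ x) := by
  simp_rw [depth_eq_iInf_lt_inner]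
  exact upperSemicontinuous_biInf fun v _ => upperSemicontinuous_iInf fun b =>
    (isOpen_lt continuous_const (by fun_prop)).upperSemicontinuous_iInf_const _
end

section
/- Let μ be a Borel probability measure on ℝ^N with compact support. Then the supremum of depth_μ over ℝ^N is attained at some point. -/
/-! The depth is upper semicontinuous, being an infimum of the upper semicontinuous functions
`x ↦ μ {y | ⟪x, v⟫ ≤ ⟪y, v⟫}`, and it vanishes outside any ball carrying all the mass. Hence its
supremum is its maximum over such a (compact) ball. -/

open MeasureTheory

open Set Filter Topology OrderDual

section

variable {α : Type*} [MeasurableSpace α] (μ : Measure α) [IsFiniteMeasure μ]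

-- `{y | t ≤ f y}` is the decreasing intersection of the sets `{y | s ≤ f y}`, `s < t`, so this is
-- continuity of the finite measure `μ` from above.
theorem upperSemicontinuous_measure_setOf_le {f : α → ℝ} (hf : Measurable f) :
    UpperSemicontinuous fun t : ℝ ↦ μ {y | t ≤ f y} := by
  intro t c hc
  have hInter : ⋂ r > toDual t, {y | ofDual r ≤ f y} = {y | t ≤ f y} := by
    ext y
    simp only [mem_iInter, mem_ofPred_eq]
    exact ⟨fun h ↦ le_of_forall_lt_imp_le_of_dense fun s hs ↦ h (toDual s) hs,
      fun h r (hr : ofDual r < t) ↦ hr.le.trans h⟩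
  have hlim := tendsto_measure_biInter_gt (μ := μ) (s := fun r : ℝᵒᵈ ↦ {y | ofDual r ≤ f y})
    (a := toDual t) (fun r _ ↦ (measurableSet_le measurable_const hf).nullMeasurableSet)
    (fun i j _ hij y hy ↦ (show ofDual j ≤ ofDual i from hij).trans hy)
    ⟨toDual (t - 1), toDual_lt_toDual.2 (sub_one_lt t), measure_ne_top μ _⟩
  rw [hInter] at hlim
  obtain ⟨r, hμr, hr⟩ := ((hlim.eventually (gt_mem_nhds hc)).and self_mem_nhdsWithin).exists
  filter_upwards [Ioi_mem_nhds (show ofDual r < t from hr)] with t' ht'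
  exact (measure_mono fun y (hy : t' ≤ f y) ↦ ht'.le.trans hy).trans_lt hμr

end

section

variable {E : Type*} [NormedAddCommGroup E] [InnerProductSpace ℝ E] [MeasurableSpace E]
  (μ : Measure E)

theorem depth_eq_iInf_measure_halfSpace (x : E) :
    depth μ x = ⨅ (v : E) (_ : ‖v‖ = 1), μ {y | inner ℝ x v ≤ inner ℝ y v} := by
  refine iInf_congr fun v ↦ iInf_congr fun _ ↦ le_antisymm (iInf_le_of_le _ (iInf_le _ le_rfl)) ?_
  exact le_iInf₂ fun a ha ↦ measure_mono fun y (hy : inner ℝ x v ≤ inner ℝ y v) ↦ ha.trans hy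

theorem upperSemicontinuous_depth [OpensMeasurableSpace E] [IsFiniteMeasure μ] :
    UpperSemicontinuous (depth μ) := by
  simp_rw [funext (depth_eq_iInf_measure_halfSpace μ)]
  refine upperSemicontinuous_biInf fun v _ ↦ ?_
  have hv : Continuous fun y : E ↦ inner ℝ y v := continuous_id.inner continuous_const
  exact (upperSemicontinuous_measure_setOf_le μ hv.measurable).comp hv

theorem depth_eq_zero_of_radius_lt_norm {K : Set E} (hμK : μ Kᶜ = 0) {R : ℝ} (hR : 0 ≤ R)
    (hKR : K ⊆ Metric.closedBall 0 R) {x : E} (hx : R < ‖x‖) : depth μ x = 0 := by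
  have hx₀ : x ≠ 0 := norm_pos_iff.1 (hR.trans_lt hx)
  set v : E := ‖x‖⁻¹ • x
  have hv : ‖v‖ = 1 := norm_smul_inv_norm (𝕜 := ℝ) hx₀
  have hxv : inner ℝ x v = ‖x‖ := by
    rw [real_inner_smul_right, real_inner_self_eq_norm_sq]
    field_simp
  have hsub : {y | inner ℝ x v ≤ inner ℝ y v} ⊆ Kᶜ := by
    intro y (hy : inner ℝ x v ≤ inner ℝ y v) hyK
    have hyR : ‖y‖ ≤ R := mem_closedBall_zero_iff.1 (hKR hyK)
    have hyv : inner ℝ y v ≤ ‖y‖ := by simpa [hv] using real_inner_le_norm y v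
    linarith
  have hdepth : depth μ x ≤ μ {y | inner ℝ x v ≤ inner ℝ y v} :=
    (depth_eq_iInf_measure_halfSpace μ x).trans_le (iInf₂_le v hv)
  exact nonpos_iff_eq_zero.1 (hdepth.trans ((measure_mono hsub).trans hμK.le))

end

/-- If a Borel probability measure on ℝ^N has compact support, then the supremum of the
depth function is attained at some point. -/
theorem depth_sup_attained (N : ℕ)
    (μ : Measure (EuclideanSpace ℝ (Fin N))) [IsProbabilityMeasure μ]
    (K : Set (EuclideanSpace ℝ (Fin N))) (hK : IsCompact K) (hμK : μ Kᶜ = 0) :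
    ∃ x : EuclideanSpace ℝ (Fin N), ∀ y, depth μ y ≤ depth μ x := by
  obtain ⟨R, hR, hKR⟩ := hK.isBounded.subset_closedBall_lt 0 0
  obtain ⟨x, -, hx⟩ := (upperSemicontinuous_depth μ).upperSemicontinuousOn _ |>.exists_isMaxOn
    (Metric.nonempty_closedBall.2 hR.le) (isCompact_closedBall 0 R)
  refine ⟨x, fun y ↦ ?_⟩
  by_cases hy : y ∈ Metric.closedBall 0 R
  · exact hx hy
  · rw [depth_eq_zero_of_radius_lt_norm μ hμK hR.le hKR (by simpa using hy)]
    exact zero_le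
end

section
/- Let γ be the tautological n-plane bundle over the real Grassmannian G_n(ℝ^N) with 2n ≤ N. Then the (N−n)-th power of the top Stiefel–Whitney class, w_n(γ)^{N−n}, is nonzero in H^{n(N−n)}(G_n(ℝ^N); F₂). -/
/-!
Send `w i ↦ eᵢ` and `w̄ j ↦ hⱼ`, the elementary and complete homogeneous symmetric polynomials in
`n` variables. Since `∑ (-1)ⁱ eᵢ h_{d-i} = 0` for `d > 0`, the relations of the presentation land
in the ideal generated by the `h_m` with `m > q = N - n`. The linear functional `rectangleCoeff`
(on symmetric polynomials: the coefficient of the Schur polynomial of the `n × q` rectangle) takes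
the value `1` on `eₙ^q = (x₁⋯xₙ)^q` but kills that ideal: its value on `x^α h_m` is the
determinant of a 0/1 matrix whose columns are indicators of final segments, which vanishes unless
the thresholds form a permutation, and the degree count `m > q` rules that out.
-/

open MvPolynomial

/-- The Stiefel–Whitney class `w i` of the tautological `n`-plane bundle, as a generator of
the Borel presentation of `H^*(G_n(ℝ^N); F₂)`. -/
noncomputable def swW (n : ℕ) (i : ℕ) : MvPolynomial (ℕ ⊕ ℕ) (ZMod 2) :=
  if i = 0 then 1 else if i ≤ n then X (Sum.inl i) else 0

/-- The dual Stiefel–Whitney class `w̄ j` (of the complementary `q = N - n` plane bundle). -/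
noncomputable def swWbar (q : ℕ) (j : ℕ) : MvPolynomial (ℕ ⊕ ℕ) (ZMod 2) :=
  if j = 0 then 1 else if j ≤ q then X (Sum.inr j) else 0

/-- The degree-`d` component of the relation `w · w̄ = 1`. -/
noncomputable def swRel (n q d : ℕ) : MvPolynomial (ℕ ⊕ ℕ) (ZMod 2) :=
  ∑ i ∈ Finset.range (d + 1), swW n i * swWbar q (d - i)

/-- The ideal of relations in the Borel presentation
`H^*(G_n(ℝ^N); F₂) ≅ F₂[w₁,…,w_n,w̄₁,…,w̄_{N-n}] / (w·w̄ = 1)`. -/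
noncomputable def grassIdeal (n q : ℕ) : Ideal (MvPolynomial (ℕ ⊕ ℕ) (ZMod 2)) :=
  Ideal.span (Set.range fun d => swRel n q (d + 1))

open Finset Equiv

theorem Finsupp.card_support_le_degree {σ : Type*} (μ : σ →₀ ℕ) : #μ.support ≤ μ.degree := by
  rw [card_eq_sum_ones, Finsupp.degree_apply]
  exact Finset.sum_le_sum fun i hi => Nat.one_le_iff_ne_zero.mpr (Finsupp.mem_support_iff.mp hi)

theorem Finsupp.sum_single_one_le_iff {σ : Type*} [DecidableEq σ] {A : Finset σ} {μ : σ →₀ ℕ} :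
    ∑ j ∈ A, Finsupp.single j 1 ≤ μ ↔ A ⊆ μ.support := by
  simp only [Finsupp.le_def, Finset.sum_apply', Finsupp.single_apply, subset_iff,
    Finsupp.mem_support_iff]
  refine forall_congr' fun j => ?_
  by_cases hj : j ∈ A <;> simp [hj, Nat.one_le_iff_ne_zero]

theorem sum_range_neg_one_pow_mul_choose_eq_zero {R : Type*} [CommRing R] {k d : ℕ} (hk : k ≠ 0)
    (hkd : k ≤ d) : ∑ i ∈ range (d + 1), (-1 : R) ^ i * (k.choose i : R) = 0 := by
  have h := congrArg (Int.cast : ℤ → R) (Int.alternating_sum_range_choose_of_ne hk)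
  push_cast at h
  rw [← h]
  refine (sum_subset (range_subset_range.mpr (by omega)) fun i _ hi => ?_).symm
  rw [Nat.choose_eq_zero_of_lt (by simpa using hi), Nat.cast_zero, mul_zero]

theorem Matrix.det_of_le_indicator_eq_zero {R : Type*} [CommRing R] {n : ℕ} (t : Fin n → ℕ)
    (ht : ¬∃ τ : Perm (Fin n), ∀ p, t p = τ p) :
    (Matrix.of fun v p : Fin n => if t p ≤ v then (1 : R) else 0).det = 0 := by
  by_cases hlt : ∀ p, t p < n
  · let τ : Fin n → Fin n := fun p => ⟨t p, hlt p⟩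
    obtain ⟨p, p', hτ, hne⟩ : ∃ p p', τ p = τ p' ∧ p ≠ p' := by
      by_contra! hinj
      exact ht ⟨Equiv.ofBijective τ (Finite.injective_iff_bijective.mp fun p p' h => hinj p p' h),
        fun p => rfl⟩
    have htt : t p = t p' := congrArg Fin.val hτ
    exact Matrix.det_zero_of_column_eq hne fun v => by simp [htt]
  · obtain ⟨p, hp⟩ := not_forall.mp hlt
    exact Matrix.det_eq_zero_of_column_eq_zero p fun v => if_neg (by omega)

theorem Matrix.det_of_le_add_eq_zero {R : Type*} [CommRing R] {n : ℕ} (q : ℕ) (b : Fin n → ℕ)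
    (hb : ∑ p, b p + q < n * q + ∑ i : Fin n, (i : ℕ)) :
    (Matrix.of fun v p : Fin n => if b p ≤ q + v then (1 : R) else 0).det = 0 := by
  have hn : 0 < n := by
    rcases n with _ | n
    · simp at hb
    · omega
  simp_rw [← Nat.sub_le_iff_le_add']
  refine det_of_le_indicator_eq_zero _ fun ⟨τ, hτ⟩ => hb.not_ge ?_
  -- Every column but the one with threshold `0` forces `b p = q + τ p`.
  obtain ⟨p₀, hp₀⟩ := τ.surjective ⟨0, hn⟩
  have hτp₀ : (τ p₀ : ℕ) = 0 := by simp [hp₀]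
  have hsum : ∑ p, (q + (τ p : ℕ)) = n * q + ∑ i : Fin n, (i : ℕ) := by
    rw [sum_add_distrib, sum_const, card_univ, Fintype.card_fin, smul_eq_mul,
      Equiv.sum_comp τ (fun i : Fin n => (i : ℕ))]
  have hle : ∀ p ∈ univ.erase p₀, q + (τ p : ℕ) ≤ b p := by
    intro p hp
    have : (τ p : ℕ) ≠ 0 := fun h =>
      (mem_erase.mp hp).1 (τ.injective (Fin.ext (by simp [hp₀, h])))
    have := hτ p
    omega
  rw [← hsum, ← add_sum_erase _ _ (mem_univ p₀), ← add_sum_erase _ _ (mem_univ p₀)]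
  have := sum_le_sum hle
  omega

namespace MvPolynomial

section Symmetric

variable {σ R : Type*}

theorem prod_map_X_toMultiset [CommSemiring R] (μ : σ →₀ ℕ) :
    ((Finsupp.toMultiset μ).map (X : σ → MvPolynomial σ R)).prod = monomial μ 1 := by
  induction μ using Finsupp.induction with
  | zero => simp
  | single_add i k μ _ _ ih =>
    rw [Finsupp.toMultiset_add, Multiset.map_add, Multiset.prod_add, ih, Finsupp.toMultiset_single,
      Multiset.map_nsmul, Multiset.prod_nsmul, Multiset.map_singleton, Multiset.prod_singleton,
      X_pow_eq_monomial, monomial_mul, one_mul]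

variable [Fintype σ] [DecidableEq σ]

theorem hsymm_eq_sum_monomial [CommSemiring R] (n : ℕ) :
    hsymm σ R n = ∑ μ ∈ univ.finsuppAntidiag n, monomial μ 1 := by
  refine Finset.sum_bij' (fun s _ => Multiset.toFinsupp (s : Multiset σ))
    (fun μ hμ => ⟨Finsupp.toMultiset μ, ?_⟩) (fun s _ => ?_) (fun μ _ => mem_univ _)
    (fun s _ => ?_) (fun μ _ => ?_) (fun s _ => ?_)
  · simpa [Finset.mem_finsuppAntidiag, Finsupp.sum_fintype] using hμ
  · rw [mem_finsuppAntidiag, ← Finsupp.degree_eq_sum]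
    exact ⟨(Multiset.toFinsupp_sum_eq _).trans s.2, subset_univ _⟩
  · exact Sym.coe_injective (Multiset.toFinsupp_toMultiset _)
  · simp
  · simp [← prod_map_X_toMultiset]

theorem coeff_hsymm [CommSemiring R] (n : ℕ) (μ : σ →₀ ℕ) :
    coeff μ (hsymm σ R n) = if μ.degree = n then 1 else 0 := by
  simp [hsymm_eq_sum_monomial, coeff_sum, coeff_monomial, Finset.mem_finsuppAntidiag,
    Finsupp.degree_eq_sum]

theorem coeff_esymm_mul_hsymm [CommSemiring R] (i k : ℕ) (μ : σ →₀ ℕ) :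
    coeff μ (esymm σ R i * hsymm σ R k) =
      if μ.degree = i + k then ((#μ.support).choose i : R) else 0 := by
  have hterm : ∀ A ∈ powersetCard i univ,
      coeff μ (monomial (∑ j ∈ A, Finsupp.single j 1) 1 * hsymm σ R k) =
        if A ⊆ μ.support then (if μ.degree = i + k then 1 else 0) else 0 := by
    intro A hA
    rw [coeff_monomial_mul', one_mul]
    by_cases hAμ : A ⊆ μ.support
    · have hdeg : μ.degree = (μ - ∑ j ∈ A, Finsupp.single j 1).degree + i := by
        have hA : (∑ j ∈ A, Finsupp.single j 1).degree = i := by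
          simpa using mem_powersetCard_univ.mp hA
        rw [← hA, ← map_add, tsub_add_cancel_of_le (Finsupp.sum_single_one_le_iff.mpr hAμ)]
      rw [if_pos (Finsupp.sum_single_one_le_iff.mpr hAμ), if_pos hAμ, coeff_hsymm]
      exact if_congr (by omega) rfl rfl
    · rw [if_neg (mt Finsupp.sum_single_one_le_iff.mp hAμ), if_neg hAμ]
  rw [esymm_eq_sum_monomial, sum_mul, coeff_sum, sum_congr rfl hterm, ← sum_filter]
  split_ifs
  · rw [sum_const, nsmul_one, ← card_powersetCard]
    congr 2
    ext A
    simp [mem_powersetCard, and_comm]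
  · simp

theorem sum_neg_one_pow_mul_esymm_mul_hsymm [CommRing R] {d : ℕ} (hd : 0 < d) :
    ∑ i ∈ range (d + 1), (-1) ^ i * esymm σ R i * hsymm σ R (d - i) = 0 := by
  ext μ
  have hterm : ∀ i ∈ range (d + 1), coeff μ ((-1) ^ i * esymm σ R i * hsymm σ R (d - i)) =
      if μ.degree = d then (-1) ^ i * ((#μ.support).choose i : R) else 0 := by
    intro i hi
    rw [mul_assoc, ← map_one C, ← map_neg, ← map_pow, coeff_C_mul, coeff_esymm_mul_hsymm,
      Nat.add_sub_cancel' (by simpa [Nat.lt_succ_iff] using hi)]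
    split_ifs <;> simp
  rw [coeff_sum, sum_congr rfl hterm, coeff_zero]
  split_ifs with hμ
  · have hsupp : #μ.support ≠ 0 := by
      intro h
      rw [card_eq_zero, Finsupp.support_eq_empty] at h
      simp [h] at hμ
      omega
    exact sum_range_neg_one_pow_mul_choose_eq_zero hsupp (hμ ▸ μ.card_support_le_degree)
  · simp

end Symmetric

section Rectangle

variable {R : Type*}

noncomputable def staircase (n : ℕ) : Fin n →₀ ℕ := Finsupp.equivFunOnFinite.symm fun i => i

noncomputable def shiftedStaircase (n q : ℕ) (σ : Perm (Fin n)) : Fin n →₀ ℕ :=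
  Finsupp.equivFunOnFinite.symm fun i => q + σ i

@[simp]
theorem shiftedStaircase_apply {n q : ℕ} (σ : Perm (Fin n)) (i : Fin n) :
    shiftedStaircase n q σ i = q + σ i := rfl

theorem degree_shiftedStaircase (n q : ℕ) (σ : Perm (Fin n)) :
    (shiftedStaircase n q σ).degree = n * q + ∑ i : Fin n, (i : ℕ) := by
  simp [Finsupp.degree_eq_sum, sum_add_distrib, Equiv.sum_comp σ (fun i : Fin n => (i : ℕ))]

theorem coeff_shiftedStaircase_monomial_mul_hsymm [CommSemiring R] {n q m : ℕ}
    (σ : Perm (Fin n)) (β : Fin n →₀ ℕ) (c : R) :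
    coeff (shiftedStaircase n q σ) (monomial β c * hsymm (Fin n) R m) =
      if (∀ p, β p ≤ q + σ p) ∧ β.degree + m = n * q + ∑ i : Fin n, (i : ℕ) then c else 0 := by
  rw [coeff_monomial_mul', coeff_hsymm]
  by_cases hβ : β ≤ shiftedStaircase n q σ
  · have := congrArg Finsupp.degree (tsub_add_cancel_of_le hβ)
    rw [map_add, degree_shiftedStaircase] at this
    have hdeg : (shiftedStaircase n q σ - β).degree = m ↔
        β.degree + m = n * q + ∑ i : Fin n, (i : ℕ) := by omega
    have hle : ∀ p, β p ≤ q + σ p := Finsupp.le_def.mp hβ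
    rw [if_pos hβ, if_congr hdeg rfl rfl]
    simp [hle]
  · rw [if_neg hβ, if_neg fun h => hβ (Finsupp.le_def.mpr h.1)]

variable (R) in
/-- With `ρ = (0, 1, …, n-1)`, this is the coefficient of `x^{(q,…,q) + ρ}` in the
antisymmetrization of `x^ρ f`. For symmetric `f` that antisymmetrization is `a_ρ f`, so by the
bialternant formula this is the coefficient of the Schur polynomial `s_{(qⁿ)}` in `f`. -/
noncomputable def rectangleCoeff [CommRing R] (n q : ℕ) :
    MvPolynomial (Fin n) R →ₗ[R] R where
  toFun f := ∑ σ : Perm (Fin n), Perm.sign σ •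
    coeff (shiftedStaircase n q σ) (monomial (staircase n) 1 * f)
  map_add' f g := by simp [mul_add, sum_add_distrib]
  map_smul' c f := by simp [Finset.mul_sum, mul_smul_comm]

theorem rectangleCoeff_apply [CommRing R] {n q : ℕ} (f : MvPolynomial (Fin n) R) :
    rectangleCoeff R n q f = ∑ σ : Perm (Fin n), Perm.sign σ •
      coeff (shiftedStaircase n q σ) (monomial (staircase n) 1 * f) := rfl

theorem esymm_fin_self [CommSemiring R] (n : ℕ) :
    esymm (Fin n) R n = monomial (Finsupp.equivFunOnFinite.symm fun _ => 1) 1 := by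
  have : powersetCard n (univ : Finset (Fin n)) = {univ} := by
    simpa using powersetCard_self (univ : Finset (Fin n))
  rw [esymm_eq_sum_monomial, this, sum_singleton]
  congr 2
  ext i
  simp [Finset.sum_apply', Finsupp.single_apply]

theorem rectangleCoeff_esymm_pow [CommRing R] (n q : ℕ) :
    rectangleCoeff R n q (esymm (Fin n) R n ^ q) = 1 := by
  rw [esymm_fin_self, monomial_pow, one_pow, rectangleCoeff_apply]
  simp_rw [monomial_mul, one_mul]
  have hexp : ∀ σ : Perm (Fin n), staircase n + q • Finsupp.equivFunOnFinite.symm (fun _ => 1) =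
      shiftedStaircase n q σ ↔ σ = 1 := by
    intro σ
    simp [Finsupp.ext_iff, staircase, Equiv.ext_iff, Fin.ext_iff, add_comm, eq_comm]
  simp_rw [coeff_monomial, hexp]
  simp

theorem rectangleCoeff_monomial_mul_hsymm [CommRing R] {n q m : ℕ} (hm : q < m)
    (α : Fin n →₀ ℕ) (c : R) :
    rectangleCoeff R n q (monomial α c * hsymm (Fin n) R m) = 0 := by
  simp_rw [rectangleCoeff_apply, ← mul_assoc, monomial_mul, one_mul]
  generalize staircase n + α = β
  simp_rw [coeff_shiftedStaircase_monomial_mul_hsymm]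
  by_cases hdeg : β.degree + m = n * q + ∑ i : Fin n, (i : ℕ)
  · have hdet := Matrix.det_of_le_add_eq_zero (R := R) q β
      (by rw [← Finsupp.degree_eq_sum]; omega)
    simp only [Matrix.det_apply, Matrix.of_apply, prod_boole, mem_univ, true_imp_iff] at hdet
    simp only [hdeg, and_true]
    calc _ = (∑ σ : Perm (Fin n), Perm.sign σ • if ∀ p, β p ≤ q + σ p then 1 else 0) * c := by
          rw [sum_mul]
          refine sum_congr rfl fun σ _ => ?_
          split_ifs <;> simp
      _ = 0 := by rw [hdet, zero_mul]
  · simp [hdeg]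

theorem rectangleCoeff_mul_hsymm [CommRing R] {n q m : ℕ} (hm : q < m)
    (f : MvPolynomial (Fin n) R) : rectangleCoeff R n q (f * hsymm (Fin n) R m) = 0 := by
  rw [f.as_sum, sum_mul, map_sum]
  exact sum_eq_zero fun α _ => rectangleCoeff_monomial_mul_hsymm hm α _

theorem rectangleCoeff_eq_zero_of_mem_span_hsymm [CommRing R] {n q : ℕ}
    {f : MvPolynomial (Fin n) R} (hf : f ∈ Ideal.span (hsymm (Fin n) R '' Set.Ioi q)) :
    rectangleCoeff R n q f = 0 := by
  obtain ⟨c, hc, rfl⟩ := Submodule.mem_span_set.mp hf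
  refine (map_finsuppSum _ _ _).trans (sum_eq_zero fun g hg => ?_)
  obtain ⟨m, hm, rfl⟩ := hc hg
  exact rectangleCoeff_mul_hsymm hm _

end Rectangle

end MvPolynomial

noncomputable def borelMap (n : ℕ) :
    MvPolynomial (ℕ ⊕ ℕ) (ZMod 2) →ₐ[ZMod 2] MvPolynomial (Fin n) (ZMod 2) :=
  aeval (Sum.elim (esymm (Fin n) (ZMod 2)) (hsymm (Fin n) (ZMod 2)))

theorem borelMap_swW (n i : ℕ) : borelMap n (swW n i) = esymm (Fin n) (ZMod 2) i := by
  rw [swW]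
  split_ifs with h0 hn
  · simp [h0]
  · simp [borelMap]
  · rw [map_zero, esymm, powersetCard_eq_empty.mpr (by simpa using hn), sum_empty]

theorem borelMap_swWbar (n q j : ℕ) :
    borelMap n (swWbar q j) = if j ≤ q then hsymm (Fin n) (ZMod 2) j else 0 := by
  rw [swWbar]
  split_ifs <;> simp_all [borelMap]

theorem borelMap_swRel_mem {n q d : ℕ} (hd : 0 < d) :
    borelMap n (swRel n q d) ∈ Ideal.span (hsymm (Fin n) (ZMod 2) '' Set.Ioi q) := by
  have hrel := sum_neg_one_pow_mul_esymm_mul_hsymm (σ := Fin n) (R := ZMod 2) hd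
  simp only [CharTwo.neg_eq, one_pow, one_mul] at hrel
  -- subtract the vanishing sum `∑ eᵢ h_{d-i}`, leaving only the terms with `d - i > q`
  rw [swRel, map_sum, ← sub_zero (∑ i ∈ _, _), ← hrel, ← sum_sub_distrib]
  refine Ideal.sum_mem _ fun i _ => ?_
  rw [map_mul, borelMap_swW, borelMap_swWbar, ← mul_sub]
  refine Ideal.mul_mem_left _ _ ?_
  split_ifs with h
  · simp
  · exact sub_mem (zero_mem _) (Ideal.subset_span ⟨d - i, not_le.mp h, rfl⟩)

theorem map_grassIdeal_le (n q : ℕ) :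
    (grassIdeal n q).map (borelMap n) ≤ Ideal.span (hsymm (Fin n) (ZMod 2) '' Set.Ioi q) := by
  rw [grassIdeal, Ideal.map_span, Ideal.span_le]
  rintro _ ⟨_, ⟨d, rfl⟩, rfl⟩
  exact borelMap_swRel_mem d.succ_pos

theorem top_sw_power_ne_zero_general (n N : ℕ) :
    Ideal.Quotient.mk (grassIdeal n (N - n)) (swW n n ^ (N - n)) ≠ 0 := by
  intro h
  have hmem := map_grassIdeal_le n (N - n)
    (Ideal.mem_map_of_mem _ (Ideal.Quotient.eq_zero_iff_mem.mp h))
  rw [map_pow, borelMap_swW] at hmem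
  have := rectangleCoeff_eq_zero_of_mem_span_hsymm hmem
  rw [rectangleCoeff_esymm_pow] at this
  exact one_ne_zero this

/-- In the mod 2 cohomology of the Grassmannian `G_n(ℝ^N)` with `2n ≤ N`, the power
`w_n(γ)^(N-n)` of the top Stiefel–Whitney class of the tautological bundle is nonzero. -/
theorem top_sw_power_ne_zero (n N : ℕ) (hn : 1 ≤ n) (hN : 2 * n ≤ N) :
    Ideal.Quotient.mk (grassIdeal n (N - n)) (swW n n ^ (N - n)) ≠ 0 :=
  top_sw_power_ne_zero_general n N
end

section
/- Let γ be the tautological n-plane bundle over G_n(ℝ^N) with N = 3m + n − 1 for integers m ≥ 1, n ≥ 2. Then the product w_1(γ)^m · w_n(γ)^{2m−1} is nonzero in H^*(G_n(ℝ^N); F₂). -/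
open MvPolynomial

namespace SW

open Finset

noncomputable def fs {n : ℕ} (f : Fin n → ℕ) : Fin n →₀ ℕ := Finsupp.equivFunOnFinite.symm f

@[simp] lemma fs_apply {n : ℕ} (f : Fin n → ℕ) (i : Fin n) : fs f i = f i := rfl

lemma fs_eq_iff {n : ℕ} {f : Fin n → ℕ} {d : Fin n →₀ ℕ} : fs f = d ↔ f = ⇑d := by
  rw [fs, Equiv.symm_apply_eq]; rfl

noncomputable def indS {n : ℕ} (S : Finset (Fin n)) : Fin n →₀ ℕ :=
  fs (fun i => if i ∈ S then 1 else 0)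

noncomputable def Epoly (n i : ℕ) : MvPolynomial (Fin n) (ZMod 2) :=
  ∑ S ∈ Finset.powersetCard i Finset.univ, monomial (indS S) 1

noncomputable def Hpoly (n t : ℕ) : MvPolynomial (Fin n) (ZMod 2) :=
  ∑ c ∈ Finset.Nat.antidiagonalTuple n t, monomial (fs c) 1

noncomputable def vecP {n : ℕ} (σ : Equiv.Perm (Fin n)) : Fin n →₀ ℕ :=
  fs (fun i => n - 1 - (σ i : ℕ))

noncomputable def Vpoly (n : ℕ) : MvPolynomial (Fin n) (ZMod 2) :=
  ∑ σ : Equiv.Perm (Fin n), monomial (vecP σ) 1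

noncomputable def psi (n q : ℕ) : MvPolynomial (ℕ ⊕ ℕ) (ZMod 2) →ₐ[ZMod 2] MvPolynomial (Fin n) (ZMod 2) :=
  aeval (fun v => match v with
    | Sum.inl i => Epoly n i
    | Sum.inr j => if j ≤ q then Hpoly n j else 0)

/-- target exponent -/
noncomputable def kap (n q : ℕ) : Fin n →₀ ℕ := fs (fun i => q + (n - 1 - (i : ℕ)))

lemma coeff_Hpoly {n t : ℕ} (d : Fin n →₀ ℕ) :
    coeff d (Hpoly n t) = if (∑ i, d i) = t then 1 else 0 := by
  classical
  rw [Hpoly, coeff_sum]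
  simp only [coeff_monomial, fs_eq_iff]
  rw [Finset.sum_ite_eq' (Finset.Nat.antidiagonalTuple n t) (⇑d) (fun _ => (1 : ZMod 2))]
  simp [Finset.Nat.mem_antidiagonalTuple]

lemma Epoly_zero (n : ℕ) : Epoly n 0 = 1 := by
  rw [Epoly, Finset.powersetCard_zero]
  rw [Finset.sum_singleton]
  have : indS (∅ : Finset (Fin n)) = 0 := by
    ext i; simp [indS]
  rw [this, monomial_zero', C_1]

lemma Hpoly_zero (n : ℕ) : Hpoly n 0 = 1 := by
  rw [Hpoly, Finset.Nat.antidiagonalTuple_zero_right, Finset.sum_singleton]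
  have : fs (0 : Fin n → ℕ) = 0 := by ext i; simp
  rw [this, monomial_zero', C_1]

lemma Epoly_gt (n i : ℕ) (h : n < i) : Epoly n i = 0 := by
  rw [Epoly, Finset.powersetCard_eq_empty.2 (by simpa using h), Finset.sum_empty]

lemma psi_swW (n q i : ℕ) : psi n q (swW n i) = Epoly n i := by
  rw [swW]
  split_ifs with h0 hn
  · subst h0; rw [map_one, Epoly_zero]
  · rw [psi, aeval_X]
  · rw [map_zero, Epoly_gt n i (by omega)]

lemma psi_swWbar (n q j : ℕ) : psi n q (swWbar q j) = if j ≤ q then Hpoly n j else 0 := by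
  rw [swWbar]
  split_ifs with h0 hq hq2
  · subst h0; rw [map_one, Hpoly_zero]
  · exact absurd (Nat.zero_le q) (h0 ▸ hq)
  · rw [psi, aeval_X]; simp [hq2]
  · rw [map_zero]

end SW

namespace SW2
open Finset SW

lemma indS_apply {n : ℕ} (S : Finset (Fin n)) (i : Fin n) :
    indS S i = if i ∈ S then 1 else 0 := rfl

lemma sum_indS {n : ℕ} (S : Finset (Fin n)) : (∑ i, indS S i) = S.card := by
  simp only [indS_apply]
  rw [Finset.sum_ite_mem, Finset.univ_inter, Finset.sum_const, smul_eq_mul, mul_one]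

lemma sum_tsub {n : ℕ} (β v : Fin n →₀ ℕ) (h : v ≤ β) :
    (∑ i, (β - v) i) + (∑ i, v i) = ∑ i, β i := by
  rw [← Finset.sum_add_distrib]
  apply Finset.sum_congr rfl
  intro i _
  rw [Finsupp.tsub_apply]
  have := Finsupp.le_def.1 h i
  omega

def tog {n : ℕ} (j₀ : Fin n) (S : Finset (Fin n)) : Finset (Fin n) :=
  if j₀ ∈ S then S.erase j₀ else insert j₀ S

lemma tog_mem_iff {n : ℕ} (j₀ : Fin n) (S : Finset (Fin n)) (i : Fin n) (hi : i ≠ j₀) :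
    i ∈ tog j₀ S ↔ i ∈ S := by
  rw [tog]
  by_cases hj : j₀ ∈ S <;> simp [hj, Finset.mem_erase, Finset.mem_insert, hi]

lemma tog_ne {n : ℕ} (j₀ : Fin n) (S : Finset (Fin n)) : tog j₀ S ≠ S := by
  rw [tog]
  by_cases hj : j₀ ∈ S
  · rw [if_pos hj]
    exact Finset.erase_ne_self.2 hj
  · rw [if_neg hj]
    exact Finset.insert_ne_self.2 hj

lemma tog_tog {n : ℕ} (j₀ : Fin n) (S : Finset (Fin n)) : tog j₀ (tog j₀ S) = S := by
  by_cases hj : j₀ ∈ S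
  · have h1 : tog j₀ S = S.erase j₀ := by rw [tog, if_pos hj]
    rw [h1, tog, if_neg (Finset.notMem_erase j₀ S), Finset.insert_erase hj]
  · have h1 : tog j₀ S = insert j₀ S := by rw [tog, if_neg hj]
    rw [h1, tog, if_pos (Finset.mem_insert_self j₀ S), Finset.erase_insert hj]

lemma indS_tog {n : ℕ} {β : Fin n →₀ ℕ} (j₀ : Fin n) (hj₀ : β j₀ ≠ 0) (S : Finset (Fin n)) :
    indS (tog j₀ S) ≤ β ↔ indS S ≤ β := by
  have key : ∀ (T T' : Finset (Fin n)), (∀ i : Fin n, i ≠ j₀ → (i ∈ T ↔ i ∈ T')) →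
      indS T ≤ β → indS T' ≤ β := by
    intro T T' hTT' h
    rw [Finsupp.le_def]
    intro i
    by_cases hi : i = j₀
    · subst hi
      rw [indS_apply]
      split_ifs <;> omega
    · have := Finsupp.le_def.1 h i
      rw [indS_apply] at this ⊢
      rw [if_congr (iff_of_eq (congrArg _ rfl) |>.trans (hTT' i hi).symm) rfl rfl]
      exact this
  constructor
  · exact key _ _ (fun i hi => (tog_mem_iff j₀ S i hi))
  · exact key _ _ (fun i hi => (tog_mem_iff j₀ S i hi).symm)

lemma lemmaA (n d : ℕ) (hd : 1 ≤ d) :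
    ∑ i ∈ Finset.range (d+1), Epoly n i * Hpoly n (d - i) = 0 := by
  classical
  apply MvPolynomial.ext
  intro β
  rw [coeff_sum, coeff_zero]
  have step1 : ∀ i ∈ Finset.range (d+1), coeff β (Epoly n i * Hpoly n (d - i))
      = ∑ S ∈ Finset.powersetCard i Finset.univ,
          (if indS S ≤ β ∧ (∑ j, β j) = d then (1 : ZMod 2) else 0) := by
    intro i hi
    rw [Finset.mem_range] at hi
    rw [Epoly, Finset.sum_mul, coeff_sum]
    refine Finset.sum_congr rfl fun S hS => ?_
    have hcard : S.card = i := (Finset.mem_powersetCard.1 hS).2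
    rw [coeff_monomial_mul']
    by_cases hle : indS S ≤ β
    · rw [if_pos hle, coeff_Hpoly, one_mul]
      have hsum := sum_tsub β (indS S) hle
      rw [sum_indS, hcard] at hsum
      refine if_congr ?_ rfl rfl
      constructor
      · intro h1
        refine ⟨hle, by omega⟩
      · intro ⟨_, h2⟩
        omega
    · rw [if_neg hle, if_neg (fun hc => hle hc.1)]
  rw [Finset.sum_congr rfl step1]
  set M := max (d+1) (n+1) with hM
  have hzero1 : ∀ i, d < i → ∀ S ∈ Finset.powersetCard i (Finset.univ : Finset (Fin n)),
      (if indS S ≤ β ∧ (∑ j, β j) = d then (1 : ZMod 2) else 0) = 0 := by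
    intro i hi S hS
    have hcard : S.card = i := (Finset.mem_powersetCard.1 hS).2
    apply if_neg
    rintro ⟨hle, hsum⟩
    have h1 : (∑ j, indS S j) ≤ ∑ j, β j := Finset.sum_le_sum fun j _ => Finsupp.le_def.1 hle j
    rw [sum_indS, hcard] at h1
    omega
  have hzero2 : ∀ i, n < i → (Finset.powersetCard i (Finset.univ : Finset (Fin n))) = ∅ := by
    intro i hi
    apply Finset.powersetCard_eq_empty.2
    simpa using hi
  have e1 : ∑ i ∈ Finset.range (d+1), ∑ S ∈ Finset.powersetCard i Finset.univ,
        (if indS S ≤ β ∧ (∑ j, β j) = d then (1 : ZMod 2) else 0)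
      = ∑ i ∈ Finset.range M, ∑ S ∈ Finset.powersetCard i Finset.univ,
        (if indS S ≤ β ∧ (∑ j, β j) = d then (1 : ZMod 2) else 0) := by
    apply Finset.sum_subset (Finset.range_subset_range.2 (le_max_left _ _))
    intro i _ hi
    rw [Finset.mem_range, not_lt] at hi
    exact Finset.sum_eq_zero (hzero1 i (by omega))
  have e2 : ∑ i ∈ Finset.range (n+1), ∑ S ∈ Finset.powersetCard i Finset.univ,
        (if indS S ≤ β ∧ (∑ j, β j) = d then (1 : ZMod 2) else 0)
      = ∑ i ∈ Finset.range M, ∑ S ∈ Finset.powersetCard i Finset.univ,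
        (if indS S ≤ β ∧ (∑ j, β j) = d then (1 : ZMod 2) else 0) := by
    apply Finset.sum_subset (Finset.range_subset_range.2 (le_max_right _ _))
    intro i _ hi
    rw [Finset.mem_range, not_lt] at hi
    rw [hzero2 i (by omega), Finset.sum_empty]
  have e3 : ∑ S ∈ (Finset.univ : Finset (Fin n)).powerset,
        (if indS S ≤ β ∧ (∑ j, β j) = d then (1 : ZMod 2) else 0)
      = ∑ i ∈ Finset.range (n+1), ∑ S ∈ Finset.powersetCard i Finset.univ,
        (if indS S ≤ β ∧ (∑ j, β j) = d then (1 : ZMod 2) else 0) := by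
    have := Finset.sum_powerset (Finset.univ : Finset (Fin n))
      (fun S => (if indS S ≤ β ∧ (∑ j, β j) = d then (1 : ZMod 2) else 0))
    rwa [Finset.card_univ, Fintype.card_fin] at this
  rw [e1, ← e2, ← e3]
  by_cases hβ : (∑ j, β j) = d
  · have hβ0 : ∃ j₀, β j₀ ≠ 0 := by
      by_contra hc
      push_neg at hc
      have : (∑ j, β j) = 0 := Finset.sum_eq_zero fun j _ => hc j
      omega
    obtain ⟨j₀, hj₀⟩ := hβ0
    apply Finset.sum_ninvolution (tog j₀)
    · intro S
      by_cases hc : indS S ≤ β ∧ (∑ j, β j) = d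
      · rw [if_pos hc, if_pos ⟨(indS_tog j₀ hj₀ S).2 hc.1, hc.2⟩]; decide
      · rw [if_neg hc, if_neg (fun hc2 => hc ⟨(indS_tog j₀ hj₀ S).1 hc2.1, hc2.2⟩)]; decide
    · intro S _
      exact tog_ne j₀ S
    · intro S
      simp [Finset.mem_powerset]
    · intro S
      exact tog_tog j₀ S
  · apply Finset.sum_eq_zero
    intro S _
    exact if_neg (fun hc => hβ hc.2)

end SW2

namespace SW3
open Finset SW SW2

noncomputable def Tsum (n : ℕ) : ℕ := ∑ i : Fin n, (n - 1 - (i : ℕ))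

lemma sum_vecP {n : ℕ} (σ : Equiv.Perm (Fin n)) : (∑ i, vecP σ i) = Tsum n := by
  rw [Tsum]
  exact Equiv.sum_comp σ (fun j : Fin n => n - 1 - (j : ℕ))

lemma vec_le_iff {n : ℕ} (σ : Equiv.Perm (Fin n)) (γ : Fin n →₀ ℕ) :
    vecP σ ≤ γ ↔ ∀ j, n - 1 - γ j ≤ (σ j : ℕ) := by
  rw [Finsupp.le_def]
  constructor <;> intro h j <;> have := h j <;> rw [vecP, fs_apply] at * <;> omega

lemma sum_fin_add {n : ℕ} : Tsum n + (∑ j : Fin n, (j : ℕ)) = n * (n - 1) := by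
  rw [Tsum, ← Finset.sum_add_distrib]
  have : ∀ j : Fin n, (n - 1 - (j : ℕ)) + (j : ℕ) = n - 1 := by
    intro j
    have := j.is_lt
    omega
  rw [Finset.sum_congr rfl (fun j _ => this j), Finset.sum_const, Finset.card_univ,
    Fintype.card_fin, smul_eq_mul]

lemma keyCount {n q t : ℕ} (hn : 1 ≤ n) (ht : q + 1 ≤ t) (γ : Fin n →₀ ℕ)
    (hγκ : ∀ i : Fin n, γ i ≤ q + (n - 1 - (i : ℕ))) (hγsum : (∑ i, γ i) = t + Tsum n) :
    (∑ σ : Equiv.Perm (Fin n), if vecP σ ≤ γ then (1 : ZMod 2) else 0) = 0 := by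
  classical
  set τ : Fin n → ℕ := fun j => n - 1 - γ j with hτ
  have hτa : ∀ j, τ j = n - 1 - γ j := fun _ => rfl
  by_cases hinj : Function.Injective τ
  · exfalso
    have hτle : ∀ i, τ i ≤ n - 1 := fun i => by rw [hτa]; omega
    set τF : Fin n → Fin n := fun i => ⟨τ i, by have := hτle i; omega⟩ with hτF
    have hinjF : Function.Injective τF := by
      intro a b hab
      apply hinj
      have : (τF a : ℕ) = (τF b : ℕ) := by rw [hab]
      simpa [hτF] using this
    have hbij := Finite.injective_iff_bijective.1 hinjF
    have hsumτ : (∑ i, τ i) = ∑ j : Fin n, (j : ℕ) := by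
      have := Function.Bijective.sum_comp hbij (fun j : Fin n => (j : ℕ))
      simpa [hτF] using this
    set C := Finset.univ.filter (fun i : Fin n => ¬ (γ i ≤ n - 1)) with hC
    have hcard : C.card ≤ 1 := by
      rw [Finset.card_le_one]
      intro a ha b hb
      rw [hC, Finset.mem_filter] at ha hb
      apply hinj
      rw [hτa, hτa]
      omega
    by_cases hCe : C = ∅
    · have hall : ∀ i : Fin n, γ i ≤ n - 1 := by
        intro i
        by_contra hc
        exact absurd (hC ▸ Finset.mem_filter.2 ⟨Finset.mem_univ i, hc⟩) (by rw [hCe]; simp)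
      have hsum2 : (∑ i, (γ i + τ i)) = ∑ i : Fin n, (n - 1) := by
        apply Finset.sum_congr rfl
        intro i _
        have := hall i
        rw [hτa]
        omega
      rw [Finset.sum_add_distrib, hγsum, hsumτ] at hsum2
      rw [Finset.sum_const, Finset.card_univ, Fintype.card_fin, smul_eq_mul] at hsum2
      have := sum_fin_add (n := n)
      omega
    · obtain ⟨i₀, hi₀⟩ := Finset.card_eq_one.1 (le_antisymm hcard (by
        rcases Finset.nonempty_of_ne_empty hCe with ⟨x, hx⟩
        exact Finset.card_pos.2 ⟨x, hx⟩))
      have hγi₀ : ¬ (γ i₀ ≤ n - 1) := by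
        have : i₀ ∈ C := by rw [hi₀]; exact Finset.mem_singleton_self i₀
        rw [hC, Finset.mem_filter] at this
        exact this.2
      have hother : ∀ i : Fin n, i ≠ i₀ → γ i ≤ n - 1 := by
        intro i hi
        by_contra hc
        have : i ∈ C := by rw [hC]; exact Finset.mem_filter.2 ⟨Finset.mem_univ i, hc⟩
        rw [hi₀, Finset.mem_singleton] at this
        exact hi this
      have hsplit : (∑ i, (γ i + τ i)) = (γ i₀ + τ i₀) +
          ∑ i ∈ Finset.univ.erase i₀, (γ i + τ i) :=
        (Finset.add_sum_erase Finset.univ _ (Finset.mem_univ i₀)).symm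
      have hτi₀ : τ i₀ = 0 := by rw [hτa]; omega
      have herase : (∑ i ∈ Finset.univ.erase i₀, (γ i + τ i)) = (n - 1) * (n - 1) := by
        rw [Finset.sum_congr rfl (fun i hi => ?_), Finset.sum_const,
          Finset.card_erase_of_mem (Finset.mem_univ i₀), Finset.card_univ, Fintype.card_fin,
          smul_eq_mul]
        have h2 := hother i (Finset.mem_erase.1 hi).1
        rw [hτa]
        omega
      rw [Finset.sum_add_distrib, hγsum, hsumτ] at hsplit
      rw [herase, hτi₀] at hsplit
      have hb := hγκ i₀
      have hb2 : γ i₀ ≤ q + (n - 1) := by have : (n:ℕ) - 1 - (i₀:ℕ) ≤ n - 1 := by omega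
                                          omega
      have hTT := sum_fin_add (n := n)
      -- t + Tsum + T2 = γ i₀ + (n-1)^2 ;  Tsum + T2 = n(n-1) = (n-1)^2 + (n-1)
      have hnn : n * (n - 1) = (n - 1) * (n - 1) + (n - 1) := by
        cases n with
        | zero => omega
        | succ k =>
          simp only [Nat.add_sub_cancel]
          ring
      omega
  · rw [Function.not_injective_iff] at hinj
    obtain ⟨i, i', heq, hne⟩ := hinj
    apply Finset.sum_ninvolution (fun σ => (Equiv.swap i i').trans σ)
    · intro σ
      have hcond : ((vecP ((Equiv.swap i i').trans σ) ≤ γ)) ↔ (vecP σ ≤ γ) := by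
        rw [vec_le_iff, vec_le_iff]
        have hswap : ∀ (σ' : Equiv.Perm (Fin n)),
            (∀ j, n - 1 - γ j ≤ ((Equiv.swap i i').trans σ' j : ℕ)) →
            ∀ j, n - 1 - γ j ≤ (σ' j : ℕ) := by
          intro σ' h j
          by_cases hji : j = i
          · subst hji
            have := h i'
            rw [Equiv.trans_apply, Equiv.swap_apply_right] at this
            rw [hτa, hτa] at heq
            omega
          · by_cases hji' : j = i'
            · subst hji'
              have := h i
              rw [Equiv.trans_apply, Equiv.swap_apply_left] at this
              rw [hτa, hτa] at heq
              omega
            · have := h j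
              rw [Equiv.trans_apply, Equiv.swap_apply_of_ne_of_ne hji hji'] at this
              exact this
        constructor
        · exact hswap σ
        · intro h
          apply hswap ((Equiv.swap i i').trans σ)
          intro j
          rw [Equiv.trans_apply, Equiv.trans_apply, Equiv.swap_apply_self]
          exact h j
      by_cases hc : vecP σ ≤ γ
      · rw [if_pos hc, if_pos (hcond.2 hc)]; decide
      · rw [if_neg hc, if_neg (fun h2 => hc (hcond.1 h2))]; decide
    · intro σ _
      intro he
      have := Equiv.ext_iff.1 he i
      rw [Equiv.trans_apply, Equiv.swap_apply_left] at this
      exact hne (σ.injective this).symm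
    · intro σ
      exact Finset.mem_univ _
    · intro σ
      ext j
      simp [Equiv.swap_apply_self]

end SW3

namespace SW4
open Finset SW SW2 SW3

lemma keyzero {n q t : ℕ} (hn : 1 ≤ n) (ht : q + 1 ≤ t) (g : MvPolynomial (Fin n) (ZMod 2)) :
    coeff (kap n q) (g * (Hpoly n t * Vpoly n)) = 0 := by
  classical
  rw [coeff_mul]
  apply Finset.sum_eq_zero
  intro x hx
  have hxsum := Finset.HasAntidiagonal.mem_antidiagonal.1 hx
  suffices h : coeff x.2 (Hpoly n t * Vpoly n) = 0 by rw [h, mul_zero]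
  have hγκ : ∀ i : Fin n, x.2 i ≤ q + (n - 1 - (i : ℕ)) := by
    intro i
    have h1 := DFunLike.congr_fun hxsum i
    rw [Finsupp.add_apply] at h1
    have h2 : kap n q i = q + (n - 1 - (i : ℕ)) := rfl
    omega
  rw [Vpoly, Finset.mul_sum, coeff_sum]
  have hterm : ∀ σ : Equiv.Perm (Fin n),
      coeff x.2 (Hpoly n t * monomial (vecP σ) 1)
        = if vecP σ ≤ x.2 ∧ (∑ i, x.2 i) = t + Tsum n then 1 else 0 := by
    intro σ
    rw [coeff_mul_monomial']
    by_cases hle : vecP σ ≤ x.2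
    · rw [if_pos hle, coeff_Hpoly, mul_one]
      have hs := sum_tsub x.2 (vecP σ) hle
      rw [sum_vecP] at hs
      refine if_congr ?_ rfl rfl
      constructor
      · intro h1; exact ⟨hle, by omega⟩
      · rintro ⟨_, h2⟩; omega
    · rw [if_neg hle, if_neg (fun hc => hle hc.1)]
  rw [Finset.sum_congr rfl (fun σ _ => hterm σ)]
  by_cases hsum : (∑ i, x.2 i) = t + Tsum n
  · have heq : ∀ σ : Equiv.Perm (Fin n),
        (if vecP σ ≤ x.2 ∧ (∑ i, x.2 i) = t + Tsum n then (1 : ZMod 2) else 0)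
          = (if vecP σ ≤ x.2 then 1 else 0) := by
      intro σ
      refine if_congr ?_ rfl rfl
      simp [hsum]
    rw [Finset.sum_congr rfl (fun σ _ => heq σ)]
    exact keyCount hn ht x.2 hγκ hsum
  · exact Finset.sum_eq_zero (fun σ _ => if_neg (fun hc => hsum hc.2))

lemma Epoly_one {n : ℕ} : Epoly n 1 = ∑ i : Fin n, X i := by
  rw [Epoly, Finset.powersetCard_one, Finset.sum_map]
  apply Finset.sum_congr rfl
  intro i _
  have h1 : indS ({i} : Finset (Fin n)) = Finsupp.single i 1 := by
    ext j
    rw [indS_apply, Finsupp.single_apply]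
    by_cases h : j = i
    · subst h; simp
    · simp [h, Ne.symm h, Finset.mem_singleton]
  show monomial (indS {i}) (1 : ZMod 2) = X i
  rw [h1]
  rfl

lemma Epoly_top {n : ℕ} : Epoly n n = monomial (fs (fun _ => 1)) 1 := by
  have hc : (Finset.univ : Finset (Fin n)).card = n := by simp
  have h2 := Finset.powersetCard_self (Finset.univ : Finset (Fin n))
  rw [hc] at h2
  rw [Epoly, h2, Finset.sum_singleton]
  have h3 : indS (Finset.univ : Finset (Fin n)) = fs (fun _ => 1) := by
    ext j; simp [indS_apply]
  rw [h3]

lemma coeff_single_pow {n : ℕ} (m : ℕ) (z : Fin n) :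
    coeff (Finsupp.single z m) ((∑ i : Fin n, (X i : MvPolynomial (Fin n) (ZMod 2))) ^ m) = 1 := by
  classical
  induction m with
  | zero => simp
  | succ k ih =>
    rw [pow_succ, Finset.mul_sum, coeff_sum]
    have hterm : ∀ i : Fin n, coeff (Finsupp.single z (k+1))
          ((∑ i : Fin n, (X i : MvPolynomial (Fin n) (ZMod 2))) ^ k * X i)
        = if i = z then coeff (Finsupp.single z k)
            ((∑ i : Fin n, (X i : MvPolynomial (Fin n) (ZMod 2))) ^ k) else 0 := by
      intro i
      rw [coeff_mul_X']
      by_cases hi : i = z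
      · subst hi
        rw [if_pos (by simp [Finsupp.mem_support_iff]), if_pos rfl]
        congr 1
        ext j
        rw [Finsupp.tsub_apply, Finsupp.single_apply, Finsupp.single_apply, Finsupp.single_apply]
        by_cases h : i = j <;> simp [h]
      · rw [if_neg hi, if_neg]
        rw [Finsupp.mem_support_iff, Finsupp.single_apply, if_neg (fun h => hi h.symm)]
        simp
    rw [Finset.sum_congr rfl (fun i _ => hterm i), Finset.sum_ite_eq' Finset.univ z,
      if_pos (Finset.mem_univ z), ih]

lemma perm_eq_one {n : ℕ} (σ : Equiv.Perm (Fin n)) (h : ∀ j : Fin n, (j : ℕ) ≤ (σ j : ℕ)) :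
    σ = 1 := by
  have hsum : (∑ j : Fin n, ((σ j : ℕ))) = ∑ j : Fin n, (j : ℕ) :=
    Equiv.sum_comp σ (fun j : Fin n => (j : ℕ))
  have := (Finset.sum_eq_sum_iff_of_le (fun j _ => h j)).1 hsum.symm
  apply Equiv.ext
  intro j
  have hj := this j (Finset.mem_univ j)
  exact (Fin.ext hj.symm : σ j = j)

noncomputable def cvec (m n : ℕ) : Fin n →₀ ℕ :=
  fs (fun i => if (i : ℕ) = 0 then 2*m - 1 else 3*m - 1)

noncomputable def rvec (m n : ℕ) : Fin n →₀ ℕ :=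
  fs (fun i => if (i : ℕ) = 0 then m + (n - 1) else n - 1 - (i : ℕ))

lemma pos_coeff {m n q : ℕ} (hm : 1 ≤ m) (hn : 2 ≤ n) (hq : q = 3*m - 1) :
    coeff (kap n q) ((Epoly n 1) ^ m * monomial (cvec m n) 1 * Vpoly n) = 1 := by
  classical
  have hrw : (Epoly n 1) ^ m * monomial (cvec m n) 1 * Vpoly n
      = ((Epoly n 1) ^ m * Vpoly n) * monomial (cvec m n) 1 := by ring
  rw [hrw, coeff_mul_monomial']
  have hle : cvec m n ≤ kap n q := by
    rw [Finsupp.le_def]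
    intro i
    show (if (i : ℕ) = 0 then 2*m - 1 else 3*m - 1) ≤ q + (n - 1 - (i : ℕ))
    have := i.is_lt
    by_cases h : (i : ℕ) = 0 <;> simp [h] <;> omega
  rw [if_pos hle, mul_one]
  have hρ : kap n q - cvec m n = rvec m n := by
    ext i
    rw [Finsupp.tsub_apply]
    show q + (n - 1 - (i : ℕ)) - (if (i : ℕ) = 0 then 2*m - 1 else 3*m - 1)
      = (if (i : ℕ) = 0 then m + (n - 1) else n - 1 - (i : ℕ))
    have := i.is_lt
    by_cases h : (i : ℕ) = 0 <;> simp [h] <;> omega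
  rw [hρ]
  rw [Vpoly, Finset.mul_sum, coeff_sum]
  rw [Finset.sum_eq_single (1 : Equiv.Perm (Fin n))]
  · rw [coeff_mul_monomial']
    have hle1 : vecP (1 : Equiv.Perm (Fin n)) ≤ rvec m n := by
      rw [Finsupp.le_def]
      intro i
      show n - 1 - ((1 : Equiv.Perm (Fin n)) i : ℕ) ≤ _
      rw [Equiv.Perm.one_apply]
      show n - 1 - (i : ℕ) ≤ (if (i : ℕ) = 0 then m + (n - 1) else n - 1 - (i : ℕ))
      by_cases h : (i : ℕ) = 0 <;> simp [h] <;> omega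
    rw [if_pos hle1, mul_one]
    have hz : (0 : ℕ) < n := by omega
    have hsingle : rvec m n - vecP (1 : Equiv.Perm (Fin n)) = Finsupp.single ⟨0, hz⟩ m := by
      ext i
      rw [Finsupp.tsub_apply, Finsupp.single_apply]
      show (if (i : ℕ) = 0 then m + (n - 1) else n - 1 - (i : ℕ))
          - (n - 1 - ((1 : Equiv.Perm (Fin n)) i : ℕ)) = _
      rw [Equiv.Perm.one_apply]
      have := i.is_lt
      by_cases h : (i : ℕ) = 0
      · rw [if_pos h, if_pos (Fin.ext h.symm : (⟨0, hz⟩ : Fin n) = i)]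
        omega
      · rw [if_neg h, if_neg (fun hc => h (by rw [← hc]))]
        omega
    rw [hsingle, Epoly_one]
    exact coeff_single_pow m ⟨0, hz⟩
  · intro σ _ hσ
    rw [coeff_mul_monomial']
    apply if_neg
    intro hle2
    apply hσ
    apply perm_eq_one
    intro j
    have hj := Finsupp.le_def.1 hle2 j
    have h2 : vecP σ j = n - 1 - (σ j : ℕ) := rfl
    have h3 : rvec m n j = (if (j : ℕ) = 0 then m + (n - 1) else n - 1 - (j : ℕ)) := rfl
    rw [h2, h3] at hj
    have := j.is_lt
    have := (σ j).is_lt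
    by_cases h : (j : ℕ) = 0
    · omega
    · rw [if_neg h] at hj
      omega
  · intro h
    exact absurd (Finset.mem_univ _) h

end SW4

namespace SW5
open Finset SW SW2 SW3 SW4

lemma psi_swRel (n q d : ℕ) (hd : 1 ≤ d) :
    psi n q (swRel n q d) = ∑ i ∈ Finset.range (d+1),
      (if q < d - i then Epoly n i * Hpoly n (d - i) else 0) := by
  have hA : psi n q (swRel n q d)
      = ∑ i ∈ Finset.range (d+1), Epoly n i * (if d - i ≤ q then Hpoly n (d - i) else 0) := by
    rw [swRel, map_sum]
    apply Finset.sum_congr rfl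
    intro i _
    rw [map_mul, psi_swW, psi_swWbar]
  have hsum : (∑ i ∈ Finset.range (d+1), Epoly n i * (if d - i ≤ q then Hpoly n (d - i) else 0))
      + (∑ i ∈ Finset.range (d+1), (if q < d - i then Epoly n i * Hpoly n (d - i) else 0))
      = ∑ i ∈ Finset.range (d+1), Epoly n i * Hpoly n (d - i) := by
    rw [← Finset.sum_add_distrib]
    apply Finset.sum_congr rfl
    intro i _
    by_cases h : d - i ≤ q
    · rw [if_pos h, if_neg (by omega), add_zero]
    · rw [if_neg h, if_pos (by omega), mul_zero, zero_add]
  rw [lemmaA n d hd] at hsum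
  rw [hA]
  have h2 : ∀ a b : MvPolynomial (Fin n) (ZMod 2), a + b = 0 → a = b := by
    intro a b hab
    have hbb : b + b = 0 := CharTwo.add_self_eq_zero b
    calc a = a + (b + b) := by rw [hbb, add_zero]
    _ = (a + b) + b := by ring
    _ = b := by rw [hab, zero_add]
  exact h2 _ _ hsum

theorem main (m n : ℕ) (hm : 1 ≤ m) (hn : 2 ≤ n) :
    swW n 1 ^ m * swW n n ^ (2 * m - 1) ∉ grassIdeal n (3 * m - 1) := by
  classical
  intro hmem
  set q := 3 * m - 1 with hq
  rw [grassIdeal] at hmem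
  have hprop : ∀ g : MvPolynomial (Fin n) (ZMod 2),
      coeff (kap n q) (g * psi n q (swW n 1 ^ m * swW n n ^ (2 * m - 1)) * Vpoly n) = 0 := by
    refine Submodule.span_induction
      (p := fun x _ => ∀ g : MvPolynomial (Fin n) (ZMod 2),
        coeff (kap n q) (g * psi n q x * Vpoly n) = 0)
      ?_ ?_ ?_ ?_ hmem
    · rintro x ⟨d, rfl⟩ g
      rw [psi_swRel n q (d+1) (by omega), Finset.mul_sum, Finset.sum_mul, coeff_sum]
      apply Finset.sum_eq_zero
      intro i _
      by_cases hbad : q < d + 1 - i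
      · rw [if_pos hbad]
        have hre : g * (Epoly n i * Hpoly n (d + 1 - i)) * Vpoly n
            = (g * Epoly n i) * (Hpoly n (d + 1 - i) * Vpoly n) := by ring
        rw [hre]
        exact keyzero (by omega) (by omega) _
      · rw [if_neg hbad, mul_zero, zero_mul, coeff_zero]
    · intro g
      rw [map_zero, mul_zero, zero_mul, coeff_zero]
    · intro x y _ _ hx hy g
      rw [map_add, mul_add, add_mul, coeff_add, hx g, hy g, add_zero]
    · intro a x _ hx g
      rw [smul_eq_mul, map_mul]
      have hre : g * (psi n q a * psi n q x) * Vpoly n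
          = (g * psi n q a) * psi n q x * Vpoly n := by ring
      rw [hre]
      exact hx (g * psi n q a)
  have hpsiP : psi n q (swW n 1 ^ m * swW n n ^ (2 * m - 1))
      = (Epoly n 1) ^ m * monomial ((2 * m - 1) • (fs (fun _ => 1) : Fin n →₀ ℕ)) 1 := by
    rw [map_mul, map_pow, map_pow, psi_swW, psi_swW, Epoly_top, monomial_pow, one_pow]
  have hw := hprop (monomial (fs (fun i : Fin n => if (i : ℕ) = 0 then 0 else m)) 1)
  rw [hpsiP] at hw
  have hmono : (monomial (fs (fun i : Fin n => if (i : ℕ) = 0 then 0 else m)) (1 : ZMod 2))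
        * ((Epoly n 1) ^ m * monomial ((2 * m - 1) • (fs (fun _ => 1) : Fin n →₀ ℕ)) 1) * Vpoly n
      = (Epoly n 1) ^ m * monomial (cvec m n) 1 * Vpoly n := by
    have h1 : (monomial (fs (fun i : Fin n => if (i : ℕ) = 0 then 0 else m)) (1 : ZMod 2))
        * monomial ((2 * m - 1) • (fs (fun _ => 1) : Fin n →₀ ℕ)) 1 = monomial (cvec m n) 1 := by
      have harg : (fs (fun i : Fin n => if (i : ℕ) = 0 then 0 else m))
          + (2 * m - 1) • (fs (fun _ => 1) : Fin n →₀ ℕ) = cvec m n := by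
        ext i
        rw [Finsupp.add_apply, Finsupp.smul_apply, fs_apply, fs_apply, smul_eq_mul, mul_one]
        show (if (i : ℕ) = 0 then 0 else m) + (2 * m - 1)
            = (if (i : ℕ) = 0 then 2 * m - 1 else 3 * m - 1)
        by_cases h : (i : ℕ) = 0 <;> simp [h] <;> omega
      rw [monomial_mul, one_mul, harg]
    calc (monomial (fs (fun i : Fin n => if (i : ℕ) = 0 then 0 else m)) (1 : ZMod 2))
        * ((Epoly n 1) ^ m * monomial ((2 * m - 1) • (fs (fun _ => 1) : Fin n →₀ ℕ)) 1) * Vpoly n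
        = ((monomial (fs (fun i : Fin n => if (i : ℕ) = 0 then 0 else m)) (1 : ZMod 2))
          * monomial ((2 * m - 1) • (fs (fun _ => 1) : Fin n →₀ ℕ)) 1)
          * (Epoly n 1) ^ m * Vpoly n := by ring
    _ = (Epoly n 1) ^ m * monomial (cvec m n) 1 * Vpoly n := by rw [h1]; ring
  rw [hmono] at hw
  rw [pos_coeff hm hn hq] at hw
  exact one_ne_zero hw

end SW5


/-- In the mod 2 cohomology of the Grassmannian `G_n(ℝ^N)` with `N = 3m + n - 1`,
`m ≥ 1`, `n ≥ 2`, the class `w₁(γ)^m · w_n(γ)^(2m-1)` of the tautological bundle `γ` is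
nonzero. -/
theorem w1_pow_mul_wn_pow_ne_zero (m n N : ℕ) (hm : 1 ≤ m) (hn : 2 ≤ n)
    (hN : N = 3 * m + n - 1) :
    Ideal.Quotient.mk (grassIdeal n (N - n))
      (swW n 1 ^ m * swW n n ^ (2 * m - 1)) ≠ 0 := by
  intro h0
  have hq : N - n = 3 * m - 1 := by omega
  rw [hq, Ideal.Quotient.eq_zero_iff_mem] at h0
  exact SW5.main m n hm hn h0
end
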